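/- For every even n ≥ 4, M(F_cy, D_3, n) ≤ (n−1)·(n−3)!; that is, any family of Hamilton cycles of K_n in which the union of any two distinct members has a vertex of degree 3 has at most (n−1)·(n−3)! members. -/

import Mathlib

/-- The edge set of the Hamilton cycle of the complete graph on `Fin n` that visits
the vertices cyclically in the order `σ 0, σ 1, …, σ (n-1), σ 0`. -/
def hamCycleEdges (n : ℕ) (σ : Equiv.Perm (Fin n)) : Finset (Sym2 (Fin n)) :=
  Finset.univ.image (fun i : Fin n =>
    s(σ i, σ ⟨((i : ℕ) + 1) % n, Nat.mod_lt _ i.pos⟩))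

/-- `E` is the edge set of a Hamilton cycle of the complete graph on `Fin n`. -/
def IsHamCycle (n : ℕ) (E : Finset (Sym2 (Fin n))) : Prop :=
  ∃ σ : Equiv.Perm (Fin n), E = hamCycleEdges n σ

/-- The degree of the vertex `v` in the graph on `Fin n` with edge set `E`. -/
def degIn (n : ℕ) (E : Finset (Sym2 (Fin n))) (v : Fin n) : ℕ :=
  (E.filter (fun e => v ∈ e)).card

/-!
Double counting against a packing of Hamilton cycles. For `n = 2t + 4`, Walecki's construction on
`ℤ/(2t+3) ∪ {∞}` gives `t + 1 = (n - 2)/2` pairwise edge-disjoint Hamilton cycles `H_c`. For each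
permutation `σ`, the cycles `σ(H_c)` are still pairwise edge-disjoint, so any two of them have a
4-regular union and at most one lies in the family `F`. Each member of `F` is `σ(H_c)` for at least
`2n` permutations `σ` (one per rotation or reflection of `H_c`), hence
`(n - 2)/2 · 2n · |F| ≤ n!`, i.e. `|F| ≤ (n - 1)(n - 3)!`.
-/

open Finset Equiv Function

section HamCycle

open Fin.CommRing

variable {n : ℕ}

lemma hamCycleEdges_mul (σ τ : Perm (Fin n)) :
    hamCycleEdges n (σ * τ) = (hamCycleEdges n τ).image (Sym2.map σ) := by
  simp only [hamCycleEdges, image_image]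
  rfl

lemma IsHamCycle.image_map {E : Finset (Sym2 (Fin n))} (hE : IsHamCycle n E) (σ : Perm (Fin n)) :
    IsHamCycle n (E.image (Sym2.map σ)) := by
  obtain ⟨τ, rfl⟩ := hE
  exact ⟨σ * τ, (hamCycleEdges_mul σ τ).symm⟩

lemma degIn_union_of_disjoint {E₁ E₂ : Finset (Sym2 (Fin n))} (h : Disjoint E₁ E₂) (v : Fin n) :
    degIn n (E₁ ∪ E₂) v = degIn n E₁ v + degIn n E₂ v := by
  rw [degIn, filter_union, card_union_of_disjoint (disjoint_filter_filter h)]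
  rfl

variable [NeZero n]

lemma hamCycleEdges_eq_image (σ : Perm (Fin n)) :
    hamCycleEdges n σ = univ.image fun i => s(σ i, σ (i + 1)) := by
  refine image_congr fun i _ => ?_
  simp [Fin.ext_iff, Fin.val_add]

lemma two_ne_zero_of_three_le (hn : 3 ≤ n) : (2 : Fin n) ≠ 0 := by
  simp [Fin.ext_iff, Nat.mod_eq_of_lt (show 2 < n by omega)]

lemma hamCycleEdges_mul_addLeft (π : Perm (Fin n)) (a : Fin n) :
    hamCycleEdges n (π * Equiv.addLeft a) = hamCycleEdges n π := by
  rw [hamCycleEdges_eq_image, hamCycleEdges_eq_image]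
  conv_rhs => rw [← image_univ_equiv (Equiv.addLeft a), image_image]
  refine image_congr fun i _ => ?_
  simp [add_assoc]

lemma hamCycleEdges_mul_subLeft (π : Perm (Fin n)) (a : Fin n) :
    hamCycleEdges n (π * Equiv.subLeft a) = hamCycleEdges n π := by
  rw [hamCycleEdges_eq_image, hamCycleEdges_eq_image]
  conv_rhs => rw [← image_univ_equiv (Equiv.subLeft (a - 1)), image_image]
  refine image_congr fun i _ => ?_
  rw [comp_apply, Sym2.eq_swap]
  simp only [Perm.mul_apply, Equiv.subLeft_apply]
  congr 2 <;> ring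

lemma injective_hamCycleEdge (hn : 3 ≤ n) (σ : Perm (Fin n)) :
    Injective fun i => s(σ i, σ (i + 1)) := by
  intro i j h
  rcases Sym2.eq_iff.1 h with ⟨hij, -⟩ | ⟨hij, hji⟩
  · exact σ.injective hij
  · replace hij := σ.injective hij
    replace hji := σ.injective hji
    exact absurd (by linear_combination hji - hij) (two_ne_zero_of_three_le hn)

lemma degIn_hamCycleEdges (hn : 3 ≤ n) (σ : Perm (Fin n)) (v : Fin n) :
    degIn n (hamCycleEdges n σ) v = 2 := by
  have hedges : univ.filter (fun i => v ∈ s(σ i, σ (i + 1))) = {σ⁻¹ v, σ⁻¹ v - 1} := by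
    ext i
    simp only [mem_filter, mem_univ, true_and, Sym2.mem_iff, mem_insert, mem_singleton,
      eq_comm (a := v), ← Perm.eq_inv_iff_eq, eq_sub_iff_add_eq]
  rw [degIn, hamCycleEdges_eq_image, filter_image,
    card_image_of_injective _ (injective_hamCycleEdge hn σ), hedges, card_pair]
  intro h
  exact two_ne_zero_of_three_le hn (by linear_combination 2 * h)

def dihedralPerm : Fin n ⊕ Fin n → Perm (Fin n) :=
  Sum.elim Equiv.addLeft Equiv.subLeft

lemma hamCycleEdges_mul_dihedralPerm (π : Perm (Fin n)) (d : Fin n ⊕ Fin n) :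
    hamCycleEdges n (π * dihedralPerm d) = hamCycleEdges n π := by
  rcases d with a | a
  · exact hamCycleEdges_mul_addLeft π a
  · exact hamCycleEdges_mul_subLeft π a

lemma injective_dihedralPerm (hn : 3 ≤ n) : Injective (dihedralPerm (n := n)) := by
  have h2 := two_ne_zero_of_three_le hn
  rintro (a | a) (b | b) h <;> have h0 := DFunLike.congr_fun h 0 <;>
    have h1 := DFunLike.congr_fun h 1 <;>
    simp only [dihedralPerm, Sum.elim_inl, Sum.elim_inr, Equiv.coe_addLeft, Equiv.subLeft_apply,
      add_zero, sub_zero] at h0 h1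
  · rw [h0]
  · exact absurd (by linear_combination h1 - h0) h2
  · exact absurd (by linear_combination h0 - h1) h2
  · rw [h0]

lemma two_mul_le_card_filter_image_map_eq (hn : 3 ≤ n) (π τ : Perm (Fin n)) :
    2 * n ≤ #{σ : Perm (Fin n) | (hamCycleEdges n π).image (Sym2.map σ) = hamCycleEdges n τ} := by
  have hmaps : ∀ d, (hamCycleEdges n π).image (Sym2.map ⇑(τ * dihedralPerm d * π⁻¹ : Perm (Fin n)))
      = hamCycleEdges n τ := fun d => by
    rw [← hamCycleEdges_mul, inv_mul_cancel_right, hamCycleEdges_mul_dihedralPerm]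
  rw [show 2 * n = #(univ : Finset (Fin n ⊕ Fin n)) by simp [two_mul]]
  exact card_le_card_of_injOn (fun d => (τ * dihedralPerm d * π⁻¹ : Perm (Fin n)))
    (fun d _ => by simpa only [coe_filter] using ⟨mem_univ _, hmaps d⟩)
    (fun d _ d' _ h => injective_dihedralPerm hn (mul_left_cancel (mul_right_cancel h)))

lemma IsHamCycle.two_mul_card_le (hn : 3 ≤ n) {H : Finset (Sym2 (Fin n))} (hH : IsHamCycle n H)
    {F : Finset (Finset (Sym2 (Fin n)))} (hF : ∀ E ∈ F, IsHamCycle n E) :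
    2 * n * #F ≤ #{σ : Perm (Fin n) | H.image (Sym2.map σ) ∈ F} := by
  obtain ⟨π, rfl⟩ := hH
  rw [card_eq_sum_card_fiberwise (t := F)
    (f := fun σ : Perm (Fin n) => (hamCycleEdges n π).image (Sym2.map σ))
    (fun σ hσ => by simpa using hσ), mul_comm, ← smul_eq_mul, ← sum_const]
  refine sum_le_sum fun E hE => ?_
  obtain ⟨τ, rfl⟩ := hF E hE
  exact (two_mul_le_card_filter_image_map_eq hn π τ).trans (card_le_card fun σ hσ => by simp_all)

lemma IsHamCycle.degIn_eq_two (hn : 3 ≤ n) {E : Finset (Sym2 (Fin n))} (hE : IsHamCycle n E)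
    (v : Fin n) : degIn n E v = 2 := by
  obtain ⟨σ, rfl⟩ := hE
  exact degIn_hamCycleEdges hn σ v

lemma IsHamCycle.degIn_union_of_disjoint (hn : 3 ≤ n) {E₁ E₂ : Finset (Sym2 (Fin n))}
    (hE₁ : IsHamCycle n E₁) (hE₂ : IsHamCycle n E₂) (h : Disjoint E₁ E₂) (v : Fin n) :
    degIn n (E₁ ∪ E₂) v = 4 := by
  rw [_root_.degIn_union_of_disjoint h, hE₁.degIn_eq_two hn, hE₂.degIn_eq_two hn]

lemma IsHamCycle.nonempty {E : Finset (Sym2 (Fin n))} (hE : IsHamCycle n E) : E.Nonempty := by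
  obtain ⟨σ, rfl⟩ := hE
  exact univ_nonempty.image _

section Counting

variable {ι : Type*} [Fintype ι] {H : ι → Finset (Sym2 (Fin n))}
  {F : Finset (Finset (Sym2 (Fin n)))}

lemma card_filter_image_map_mem_le_one (hn : 3 ≤ n) (hH : ∀ c, IsHamCycle n (H c))
    (hdisj : Pairwise (Disjoint on H))
    (hdeg : ∀ E₁ ∈ F, ∀ E₂ ∈ F, E₁ ≠ E₂ → ∃ v : Fin n, degIn n (E₁ ∪ E₂) v = 3)
    (σ : Perm (Fin n)) : #{c | (H c).image (Sym2.map σ) ∈ F} ≤ 1 := by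
  refine card_le_one.2 fun c hc c' hc' => ?_
  by_contra hne
  simp only [mem_filter, mem_univ, true_and] at hc hc'
  have hσc := (hH c).image_map σ
  have hσc' := (hH c').image_map σ
  have hd : Disjoint ((H c).image (Sym2.map σ)) ((H c').image (Sym2.map σ)) :=
    (disjoint_image (Sym2.map.injective σ.injective)).2 (hdisj hne)
  have hne' : (H c).image (Sym2.map σ) ≠ (H c').image (Sym2.map σ) := fun h =>
    hσc'.nonempty.ne_empty (disjoint_self_iff_empty _ |>.1 (h ▸ hd))
  obtain ⟨v, hv⟩ := hdeg _ hc _ hc' hne'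
  rw [hσc.degIn_union_of_disjoint hn hσc' hd] at hv
  exact absurd hv (by decide)

theorem card_mul_two_mul_card_le_factorial (hn : 3 ≤ n) (hH : ∀ c, IsHamCycle n (H c))
    (hdisj : Pairwise (Disjoint on H)) (hF : ∀ E ∈ F, IsHamCycle n E)
    (hdeg : ∀ E₁ ∈ F, ∀ E₂ ∈ F, E₁ ≠ E₂ → ∃ v : Fin n, degIn n (E₁ ∪ E₂) v = 3) :
    Fintype.card ι * (2 * n * #F) ≤ n.factorial := by
  calc Fintype.card ι * (2 * n * #F)
      ≤ ∑ c, #{σ : Perm (Fin n) | (H c).image (Sym2.map σ) ∈ F} := by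
        rw [← smul_eq_mul, ← card_univ, ← sum_const]
        exact sum_le_sum fun c _ => (hH c).two_mul_card_le hn hF
    _ = ∑ σ : Perm (Fin n), #{c | (H c).image (Sym2.map σ) ∈ F} := by
        simp only [card_filter]
        exact sum_comm
    _ ≤ ∑ _σ : Perm (Fin n), 1 :=
        sum_le_sum fun σ _ => card_filter_image_map_mem_le_one hn hH hdisj hdeg σ
    _ = n.factorial := by simp [Fintype.card_perm]

end Counting

end HamCycle

lemma ZMod.natCast_inj_of_lt {m a b : ℕ} (ha : a < m) (hb : b < m) (h : (a : ZMod m) = b) :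
    a = b := by
  rwa [ZMod.natCast_eq_natCast_iff', Nat.mod_eq_of_lt ha, Nat.mod_eq_of_lt hb] at h

section Walecki

variable (t : ℕ)

def zigzag (i : ℕ) : ZMod (2 * t + 3) :=
  if i % 2 = 0 then ((i / 2 : ℕ) : ZMod (2 * t + 3)) else -((i / 2 : ℕ) : ZMod (2 * t + 3))

lemma zigzag_injOn : Set.InjOn (zigzag t) (Set.Icc 1 (2 * t + 3)) := by
  rintro i ⟨hi₁, hi₂⟩ j ⟨hj₁, hj₂⟩ h
  unfold zigzag at h
  split_ifs at h with hi hj hj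
  · have := ZMod.natCast_inj_of_lt (by omega) (by omega) h
    omega
  · have := ZMod.natCast_inj_of_lt (m := 2 * t + 3) (a := i / 2 + j / 2) (b := 0)
      (by omega) (by omega) (by push_cast; linear_combination h)
    omega
  · have := ZMod.natCast_inj_of_lt (m := 2 * t + 3) (a := i / 2 + j / 2) (b := 0)
      (by omega) (by omega) (by push_cast; linear_combination -h)
    omega
  · have := ZMod.natCast_inj_of_lt (by omega) (by omega) (neg_injective h)
    omega

lemma zigzag_add_zigzag_succ (i : ℕ) :
    zigzag t i + zigzag t (i + 1) = 0 ∨ zigzag t i + zigzag t (i + 1) = 1 := by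
  unfold zigzag
  rcases Nat.mod_two_eq_zero_or_one i with hi | hi
  · left
    rw [if_pos hi, if_neg (by omega), show (i + 1) / 2 = i / 2 by omega, add_neg_cancel]
  · right
    rw [if_neg (by omega), if_pos (by omega), show (i + 1) / 2 = i / 2 + 1 by omega]
    push_cast
    ring

/-- `ZMod (2 * t + 3)` as the first `2 * t + 3` vertices of `Fin (2 * t + 4)`; the last vertex
plays the role of `∞`. -/
def ofZMod (a : ZMod (2 * t + 3)) : Fin (2 * t + 4) :=
  ⟨a.val, by have := a.val_lt; omega⟩

lemma ofZMod_injective : Injective (ofZMod t) :=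
  fun _ _ h => ZMod.val_injective _ (Fin.mk.inj h)

lemma ofZMod_ne_last (a : ZMod (2 * t + 3)) : ofZMod t a ≠ Fin.last _ :=
  Fin.ne_of_val_ne (by have := a.val_lt; simp only [ofZMod, Fin.val_last]; omega)

def waleckiFun (k : ZMod (2 * t + 3)) (i : Fin (2 * t + 4)) : Fin (2 * t + 4) :=
  if i = 0 then Fin.last _ else ofZMod t (k + zigzag t i)

lemma waleckiFun_injective (k : ZMod (2 * t + 3)) : Injective (waleckiFun t k) := by
  intro i j h
  unfold waleckiFun at h
  split_ifs at h with hi hj hj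
  · rw [hi, hj]
  · exact absurd h.symm (ofZMod_ne_last t _)
  · exact absurd h (ofZMod_ne_last t _)
  · have hi' : (i : ℕ) ≠ 0 := fun h0 => hi (Fin.ext h0)
    have hj' : (j : ℕ) ≠ 0 := fun h0 => hj (Fin.ext h0)
    exact Fin.ext (zigzag_injOn t ⟨by omega, by omega⟩ ⟨by omega, by omega⟩
      (add_left_cancel (ofZMod_injective t h)))

/-- Walecki's Hamilton cycle `∞, k, k + 1, k - 1, k + 2, k - 2, …, k + (t + 1), k - (t + 1)`. -/
noncomputable def walecki (k : ZMod (2 * t + 3)) : Perm (Fin (2 * t + 4)) :=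
  Equiv.ofBijective _ (Finite.injective_iff_bijective.1 (waleckiFun_injective t k))

/-- Since `∞ = Fin.last` is cast to `2 * t + 3 = 0`, an edge through `∞` gets the label of its
other endpoint. -/
def edgeSum : Sym2 (Fin (2 * t + 4)) → ZMod (2 * t + 3) :=
  Sym2.lift ⟨fun a b => ((a : ℕ) : ZMod (2 * t + 3)) + ((b : ℕ) : ZMod (2 * t + 3)),
    fun _ _ => add_comm _ _⟩

@[simp] lemma edgeSum_mk (a b : Fin (2 * t + 4)) :
    edgeSum t s(a, b) = ((a : ℕ) : ZMod (2 * t + 3)) + ((b : ℕ) : ZMod (2 * t + 3)) := rfl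

@[simp] lemma natCast_ofZMod (a : ZMod (2 * t + 3)) :
    ((ofZMod t a : ℕ) : ZMod (2 * t + 3)) = a :=
  ZMod.natCast_zmod_val a

lemma mem_hamCycleEdges_walecki {c : ℕ} {e : Sym2 (Fin (2 * t + 4))}
    (he : e ∈ hamCycleEdges _ (walecki t c)) :
    (Fin.last _ ∈ e ∧ (edgeSum t e = (c : ℕ) ∨ edgeSum t e = ((c + t + 2 : ℕ) : ZMod _))) ∨
      (Fin.last _ ∉ e ∧
        (edgeSum t e = ((2 * c : ℕ) : ZMod _) ∨ edgeSum t e = ((2 * c + 1 : ℕ) : ZMod _))) := by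
  rw [hamCycleEdges_eq_image, mem_image] at he
  obtain ⟨i, -, rfl⟩ := he
  simp only [walecki, Equiv.ofBijective_apply, waleckiFun]
  rcases eq_or_ne i 0 with rfl | hi
  · have hz : zigzag t 1 = 0 := by simp [zigzag]
    left
    simp [hz]
  rcases eq_or_ne i (Fin.last _) with rfl | hi'
  · have hz : zigzag t (2 * t + 3) = -((t + 1 : ℕ) : ZMod _) := by
      simp [zigzag, show (2 * t + 3) % 2 = 1 by omega, show (2 * t + 3) / 2 = t + 1 by omega]
    left
    refine ⟨by simp, Or.inr ?_⟩
    simp only [Fin.last_add_one, hi, if_pos, if_false, edgeSum_mk, natCast_ofZMod, Fin.val_last, hz]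
    push_cast
    ring
  · have hsucc : ((i + 1 : Fin _) : ℕ) = i + 1 :=
      Fin.val_add_one_of_lt (Fin.lt_last_iff_ne_last.2 hi')
    have hi1 : i + 1 ≠ 0 := fun h => by simp [h] at hsucc
    right
    refine ⟨by simp [hi, hi1, Ne.symm (ofZMod_ne_last _ _)], ?_⟩
    simp only [hi, hi1, if_false, edgeSum_mk, natCast_ofZMod, hsucc]
    rcases zigzag_add_zigzag_succ t i with h | h
    · left; push_cast; linear_combination h
    · right; push_cast; linear_combination h

lemma disjoint_hamCycleEdges_walecki {c c' : ℕ} (hc : c ≤ t) (hc' : c' ≤ t) (hne : c ≠ c') :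
    Disjoint (hamCycleEdges _ (walecki t c)) (hamCycleEdges _ (walecki t c')) := by
  refine disjoint_left.2 fun e he he' => ?_
  rcases mem_hamCycleEdges_walecki t he with ⟨hl, h | h⟩ | ⟨hl, h | h⟩ <;>
    rcases mem_hamCycleEdges_walecki t he' with ⟨hl', h' | h'⟩ | ⟨hl', h' | h'⟩ <;>
    first
    | contradiction
    | have := ZMod.natCast_inj_of_lt (by omega) (by omega) (h.symm.trans h'); omega

theorem exists_pairwise_disjoint_isHamCycle :
    ∃ H : Fin (t + 1) → Finset (Sym2 (Fin (2 * t + 4))),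
      (∀ c, IsHamCycle _ (H c)) ∧ Pairwise (Disjoint on H) :=
  ⟨fun c => hamCycleEdges _ (walecki t (c : ℕ)), fun _ => ⟨_, rfl⟩, fun c c' h =>
    disjoint_hamCycleEdges_walecki t (by omega) (by omega) (Fin.val_ne_of_ne h)⟩

end Walecki

/-- For every even `n ≥ 4`, any family of Hamilton cycles of `K_n` in which the union
of any two distinct members has a vertex of degree 3 has at most `(n−1)·(n−3)!`
members. -/
theorem stmt8 (n : ℕ) (hn : 4 ≤ n) (heven : Even n)
    (F : Finset (Finset (Sym2 (Fin n))))
    (hF : ∀ E ∈ F, IsHamCycle n E)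
    (hdeg : ∀ E₁ ∈ F, ∀ E₂ ∈ F, E₁ ≠ E₂ → ∃ v : Fin n, degIn n (E₁ ∪ E₂) v = 3) :
    F.card ≤ (n - 1) * Nat.factorial (n - 3) := by
  obtain ⟨t, rfl⟩ : ∃ t, n = 2 * t + 4 := ⟨n / 2 - 2, by obtain ⟨k, rfl⟩ := heven; omega⟩
  obtain ⟨H, hH, hdisj⟩ := exists_pairwise_disjoint_isHamCycle t
  have hcount := card_mul_two_mul_card_le_factorial (by omega) hH hdisj hF hdeg
  have hfact : (2 * t + 4).factorial =
      (2 * t + 4) * (2 * t + 3) * (2 * t + 2) * (2 * t + 1).factorial := by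
    simp only [Nat.factorial_succ]
    ring
  rw [Fintype.card_fin, hfact] at hcount
  rw [show 2 * t + 4 - 1 = 2 * t + 3 by omega, show 2 * t + 4 - 3 = 2 * t + 1 by omega]
  refine Nat.le_of_mul_le_mul_right (c := (2 * t + 4) * (2 * t + 2)) ?_ (by positivity)
  linarith
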